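/- Suppose the factor graph admits a valid solution x*, the priors satisfy the sufficient initialization for x*, and for some n ≥ 0 the variable-to-factor messages satisfy m^{(n)}_{v→J}(x*_v) > m^{(n)}_{v→J}(1 − x*_v) for every v ∈ V and every J ∈ 𝒥_v. Then the marginals at the next iteration satisfy r^{(n+1)}_v(x*_v) > r^{(n+1)}_v(1 − x*_v) for every v ∈ V. -/

import Mathlib

open Finset

/-- A factor graph: finite variable index set `V`, finite factor index set `𝒥`,
a nonempty neighborhood `nbhd J ⊆ V` for each factor `J`, every variable belonging
to at least one factor, and a `{0,1}`-valued factor function `g J` on `{0,1}^{V_J}`. -/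
structure FactorGraph (V 𝒥 : Type) [Fintype V] [DecidableEq V] [Fintype 𝒥] [DecidableEq 𝒥] where
  nbhd : 𝒥 → Finset V
  nbhd_nonempty : ∀ J : 𝒥, (nbhd J).Nonempty
  facs_nonempty : ∀ v : V, ∃ J : 𝒥, v ∈ nbhd J
  g : (J : 𝒥) → ({y // y ∈ nbhd J} → Bool) → Bool

variable {V 𝒥 : Type} [Fintype V] [DecidableEq V] [Fintype 𝒥] [DecidableEq 𝒥]

/-- `𝒥_v`: the set of factors adjacent to variable `v`. -/
def FactorGraph.Jset (FG : FactorGraph V 𝒥) (v : V) : Finset 𝒥 :=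
  univ.filter fun J => v ∈ FG.nbhd J

/-- Restriction of a global assignment to the neighborhood of factor `J`. -/
def FactorGraph.restrict (FG : FactorGraph V 𝒥) (x : V → Bool) (J : 𝒥) :
    {y // y ∈ FG.nbhd J} → Bool :=
  fun y => x y.1

/-- `x` is a valid solution if every factor evaluates to `1` on it. -/
def FactorGraph.ValidSolution (FG : FactorGraph V 𝒥) (x : V → Bool) : Prop :=
  ∀ J : 𝒥, FG.g J (FG.restrict x J) = true

/-- `κ_v = max_{J ∈ 𝒥_v} |{z ∈ {0,1}^{V_J} : g_J(z) = 1}|`. -/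
def FactorGraph.kappa (FG : FactorGraph V 𝒥) (v : V) : ℕ :=
  (FG.Jset v).sup fun J =>
    ((univ : Finset ({y // y ∈ FG.nbhd J} → Bool)).filter fun z => FG.g J z = true).card

/-- `ε_v = 1 / (1 + κ_v ^ |𝒥_v|)`. -/
noncomputable def FactorGraph.eps (FG : FactorGraph V 𝒥) (v : V) : ℝ :=
  1 / (1 + (FG.kappa v : ℝ) ^ (FG.Jset v).card)

/-- Priors: `P_v(0) = q_v`, `P_v(1) = 1 - q_v`. -/
def prior (q : V → ℝ) (v : V) (x : Bool) : ℝ :=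
  if x then 1 - q v else q v

/-- A run of loopy belief propagation on the factor graph `FG` with priors `q`:
messages `mVF` (variable-to-factor) and `mFV` (factor-to-variable) in `[0,1]`,
positive normalization constants, initialization by the priors, the sum-product
update rules, and per-message normalization. -/
structure BPRun (FG : FactorGraph V 𝒥) (q : V → ℝ) where
  q_mem : ∀ v : V, q v ∈ Set.Icc (0 : ℝ) 1
  mVF : ℕ → V → 𝒥 → Bool → ℝ
  mFV : ℕ → 𝒥 → V → Bool → ℝ
  CFV : ℕ → 𝒥 → V → ℝ
  CVF : ℕ → V → 𝒥 → ℝ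
  CFV_pos : ∀ n J v, v ∈ FG.nbhd J → 0 < CFV n J v
  CVF_pos : ∀ n v J, v ∈ FG.nbhd J → 0 < CVF n v J
  mVF_mem : ∀ n v J x, v ∈ FG.nbhd J → mVF n v J x ∈ Set.Icc (0 : ℝ) 1
  mFV_mem : ∀ n J v x, v ∈ FG.nbhd J → mFV n J v x ∈ Set.Icc (0 : ℝ) 1
  mVF_init : ∀ v J, v ∈ FG.nbhd J →
    mVF 0 v J false = q v ∧ mVF 0 v J true = 1 - q v
  mFV_eq : ∀ n : ℕ, ∀ J v, ∀ hv : v ∈ FG.nbhd J, ∀ x : Bool,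
    mFV (n + 1) J v x = CFV (n + 1) J v *
      ∑ z : {y // y ∈ FG.nbhd J} → Bool,
        (if z ⟨v, hv⟩ = x ∧ FG.g J z = true then
          ∏ y ∈ ((FG.nbhd J).erase v).attach,
            mVF n y.1 J (z ⟨y.1, Finset.mem_of_mem_erase y.2⟩)
        else 0)
  mVF_eq : ∀ n : ℕ, ∀ v J, v ∈ FG.nbhd J → ∀ x : Bool,
    mVF (n + 1) v J x = CVF (n + 1) v J * prior q v x *
      ∏ I ∈ (FG.Jset v).erase J, mFV (n + 1) I v x
  mVF_norm : ∀ n v J, v ∈ FG.nbhd J → mVF n v J false + mVF n v J true = 1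
  mFV_norm : ∀ n J v, v ∈ FG.nbhd J →
    mFV (n + 1) J v false + mFV (n + 1) J v true = 1

/-- Marginals: `r^{(n)}_v(x) = P_v(x) · ∏_{J ∈ 𝒥_v} m^{(n)}_{J→v}(x)`. -/
noncomputable def marginal (FG : FactorGraph V 𝒥) {q : V → ℝ} (R : BPRun FG q)
    (n : ℕ) (v : V) (x : Bool) : ℝ :=
  prior q v x * ∏ J ∈ FG.Jset v, R.mFV n J v x

/-- The priors satisfy the sufficient initialization for `x`:
`q_v > 1 - ε_v` if `x_v = 0` and `q_v < ε_v` if `x_v = 1`. -/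
def SuffInit (FG : FactorGraph V 𝒥) (q : V → ℝ) (x : V → Bool) : Prop :=
  ∀ v : V, (x v = false → 1 - FG.eps v < q v) ∧ (x v = true → q v < FG.eps v)

/-! Fix `v` and a factor `J ∋ v`, and let `T = ∏_{y ∈ V_J ∖ {v}} m_{y→J}(x*_y)`. Since every
incoming message is largest at `x*`, each of the at most `κ_v` configurations accepted by `g_J`
contributes at most `T` to the unnormalized message `J → v` at `1 - x*_v`, while the one at `x*_v`
contains the term of the valid configuration `x*|_{V_J}`, which is exactly `T > 0`. Hence
`m_{J→v}(1 - x*_v) ≤ κ_v m_{J→v}(x*_v)`, and the product over `𝒥_v` loses a factor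
`κ_v ^ |𝒥_v|`. The sufficient initialization is exactly what absorbs it:
`P_v(1 - x*_v) < ε_v` and `P_v(x*_v) > 1 - ε_v = ε_v κ_v ^ |𝒥_v|`. -/

theorem Bool.apply_le_of_apply_not_lt {α : Type*} [LinearOrder α] {f : Bool → α} {a : Bool}
    (h : f (!a) < f a) (b : Bool) : f b ≤ f a := by
  cases a <;> cases b <;> simp_all [le_of_lt]

theorem Finset.prod_le_pow_card_mul_prod {ι R : Type*} [CommSemiring R] [PartialOrder R]
    [IsOrderedRing R] (s : Finset ι) {f g : ι → R} {c : R}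
    (hf : ∀ i ∈ s, 0 ≤ f i) (hfg : ∀ i ∈ s, f i ≤ c * g i) :
    ∏ i ∈ s, f i ≤ c ^ s.card * ∏ i ∈ s, g i := by
  rw [← Finset.prod_const, ← Finset.prod_mul_distrib]
  exact Finset.prod_le_prod hf hfg

theorem prior_not {ι : Type} (q : ι → ℝ) (i : ι) (x : Bool) :
    prior q i (!x) = 1 - prior q i x := by
  cases x <;> simp [prior]

theorem prior_nonneg {ι : Type} {q : ι → ℝ} {i : ι} (hq : q i ∈ Set.Icc (0 : ℝ) 1) (x : Bool) :
    0 ≤ prior q i x := by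
  cases x <;> simp [prior, hq.1, hq.2]

theorem SuffInit.one_sub_eps_lt_prior {FG : FactorGraph V 𝒥} {q : V → ℝ} {x : V → Bool}
    (h : SuffInit FG q x) (v : V) : 1 - FG.eps v < prior q v (x v) := by
  cases hx : x v
  · simpa [prior] using (h v).1 hx
  · simpa [prior] using (h v).2 hx

namespace FactorGraph

variable (FG : FactorGraph V 𝒥)

@[simp]
theorem mem_Jset {v : V} {J : 𝒥} : J ∈ FG.Jset v ↔ v ∈ FG.nbhd J := by
  simp [Jset]

theorem one_sub_eps (v : V) : 1 - FG.eps v = FG.eps v * (FG.kappa v : ℝ) ^ (FG.Jset v).card := by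
  have hden : (0 : ℝ) < 1 + (FG.kappa v : ℝ) ^ (FG.Jset v).card := by positivity
  rw [eps]
  field_simp
  ring

def satisfying (J : 𝒥) : Finset ({y // y ∈ FG.nbhd J} → Bool) :=
  univ.filter fun z => FG.g J z = true

theorem card_satisfying_le_kappa {v : V} {J : 𝒥} (hv : v ∈ FG.nbhd J) :
    (FG.satisfying J).card ≤ FG.kappa v :=
  Finset.le_sup (f := fun J => (FG.satisfying J).card) ((FG.mem_Jset).2 hv)

/-- The sum-product update of the factor `J` towards `v`, before normalization. -/
noncomputable def factorSum (μ : V → Bool → ℝ) (J : 𝒥) {v : V} (hv : v ∈ FG.nbhd J)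
    (x : Bool) : ℝ :=
  ∑ z : {y // y ∈ FG.nbhd J} → Bool,
    (if z ⟨v, hv⟩ = x ∧ FG.g J z = true then
      ∏ y ∈ ((FG.nbhd J).erase v).attach, μ y.1 (z ⟨y.1, Finset.mem_of_mem_erase y.2⟩)
    else 0)

variable {FG} {μ : V → Bool → ℝ} {J : 𝒥} {v : V}

theorem prod_le_factorSum (hμ : ∀ y ∈ FG.nbhd J, ∀ b, 0 ≤ μ y b) {x : V → Bool}
    (hx : FG.g J (FG.restrict x J) = true) (hv : v ∈ FG.nbhd J) :
    ∏ y ∈ (FG.nbhd J).erase v, μ y (x y) ≤ FG.factorSum μ J hv (x v) := by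
  have hterm_nonneg : ∀ z : {y // y ∈ FG.nbhd J} → Bool,
      0 ≤ (if z ⟨v, hv⟩ = x v ∧ FG.g J z = true then
        ∏ y ∈ ((FG.nbhd J).erase v).attach, μ y.1 (z ⟨y.1, Finset.mem_of_mem_erase y.2⟩)
      else 0) := fun z => by
    split_ifs
    · exact Finset.prod_nonneg fun y _ => hμ y.1 (Finset.mem_of_mem_erase y.2) _
    · exact le_rfl
  have := Finset.single_le_sum (fun z _ => hterm_nonneg z) (Finset.mem_univ (FG.restrict x J))
  simpa [factorSum, restrict, hx, Finset.prod_attach] using this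

theorem factorSum_le_card_mul_prod (hμ : ∀ y ∈ FG.nbhd J, ∀ b, 0 ≤ μ y b)
    {x : V → Bool} (hmax : ∀ y ∈ FG.nbhd J, ∀ b, μ y b ≤ μ y (x y))
    (hv : v ∈ FG.nbhd J) (b : Bool) :
    FG.factorSum μ J hv b ≤ (FG.satisfying J).card * ∏ y ∈ (FG.nbhd J).erase v, μ y (x y) := by
  have hprod_nonneg : 0 ≤ ∏ y ∈ (FG.nbhd J).erase v, μ y (x y) :=
    Finset.prod_nonneg fun y hy => hμ y (Finset.mem_of_mem_erase hy) _
  rw [satisfying, Finset.card_filter, Nat.cast_sum, Finset.sum_mul]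
  refine Finset.sum_le_sum fun z _ => ?_
  split_ifs with hz hg hg
  · rw [Nat.cast_one, one_mul]
    exact (Finset.prod_le_prod (fun y _ => hμ y.1 (Finset.mem_of_mem_erase y.2) _)
      (fun y _ => hmax y.1 (Finset.mem_of_mem_erase y.2) _)).trans_eq
        (Finset.prod_attach _ fun y => μ y (x y))
  · exact absurd hz.2 hg
  · simpa using hprod_nonneg
  · simp

end FactorGraph

namespace BPRun

variable {FG : FactorGraph V 𝒥} {q : V → ℝ} (R : BPRun FG q) {n : ℕ} {J : 𝒥} {v : V}

theorem mFV_succ_eq_mul_factorSum (hv : v ∈ FG.nbhd J) (x : Bool) :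
    R.mFV (n + 1) J v x = R.CFV (n + 1) J v * FG.factorSum (fun y => R.mVF n y J) J hv x :=
  R.mFV_eq n J v hv x

theorem mFV_succ_pos {x : V → Bool} (hx : FG.g J (FG.restrict x J) = true)
    (hmsg : ∀ y ∈ FG.nbhd J, R.mVF n y J (!x y) < R.mVF n y J (x y)) (hv : v ∈ FG.nbhd J) :
    0 < R.mFV (n + 1) J v (x v) := by
  have hprod_pos : 0 < ∏ y ∈ (FG.nbhd J).erase v, R.mVF n y J (x y) :=
    Finset.prod_pos fun y hy =>
      (R.mVF_mem n y J _ (Finset.mem_of_mem_erase hy)).1.trans_lt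
        (hmsg y (Finset.mem_of_mem_erase hy))
  rw [R.mFV_succ_eq_mul_factorSum hv]
  exact mul_pos (R.CFV_pos _ J v hv)
    (hprod_pos.trans_le (FG.prod_le_factorSum (fun y hy b => (R.mVF_mem n y J b hy).1) hx hv))

theorem mFV_succ_le_kappa_mul {x : V → Bool} (hx : FG.g J (FG.restrict x J) = true)
    (hmsg : ∀ y ∈ FG.nbhd J, R.mVF n y J (!x y) < R.mVF n y J (x y)) (hv : v ∈ FG.nbhd J)
    (b : Bool) : R.mFV (n + 1) J v b ≤ FG.kappa v * R.mFV (n + 1) J v (x v) := by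
  have hμ : ∀ y ∈ FG.nbhd J, ∀ b, 0 ≤ R.mVF n y J b := fun y hy b => (R.mVF_mem n y J b hy).1
  have hmax : ∀ y ∈ FG.nbhd J, ∀ b, R.mVF n y J b ≤ R.mVF n y J (x y) := fun y hy =>
    Bool.apply_le_of_apply_not_lt (hmsg y hy)
  have hC := (R.CFV_pos (n + 1) J v hv).le
  have hcard : ((FG.satisfying J).card : ℝ) ≤ FG.kappa v :=
    Nat.cast_le.2 (FG.card_satisfying_le_kappa hv)
  rw [R.mFV_succ_eq_mul_factorSum hv, R.mFV_succ_eq_mul_factorSum hv]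
  calc _ ≤ R.CFV (n + 1) J v *
        ((FG.satisfying J).card * ∏ y ∈ (FG.nbhd J).erase v, R.mVF n y J (x y)) :=
        mul_le_mul_of_nonneg_left (FG.factorSum_le_card_mul_prod hμ hmax hv b) hC
    _ ≤ R.CFV (n + 1) J v *
        (FG.kappa v * FG.factorSum (fun y => R.mVF n y J) J hv (x v)) := by
        refine mul_le_mul_of_nonneg_left
          (mul_le_mul hcard (FG.prod_le_factorSum hμ hx hv) ?_ (Nat.cast_nonneg _)) hC
        exact Finset.prod_nonneg fun y hy => hμ y (Finset.mem_of_mem_erase hy) _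
    _ = _ := by ring

end BPRun

/-- **Induction step for marginals**: if `x*` is a valid solution, the priors
satisfy the sufficient initialization for `x*`, and at some iteration `n` the
variable-to-factor messages satisfy `m^{(n)}_{v→J}(x*_v) > m^{(n)}_{v→J}(1 - x*_v)`
for every `v ∈ V` and `J ∈ 𝒥_v`, then the marginals at iteration `n + 1` satisfy
`r^{(n+1)}_v(x*_v) > r^{(n+1)}_v(1 - x*_v)` for every `v ∈ V`. -/
theorem bp_marginal_induction_step
    {V 𝒥 : Type} [Fintype V] [DecidableEq V] [Fintype 𝒥] [DecidableEq 𝒥]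
    (FG : FactorGraph V 𝒥) (q : V → ℝ) (R : BPRun FG q)
    (xstar : V → Bool) (hvalid : FG.ValidSolution xstar)
    (hinit : SuffInit FG q xstar) (n : ℕ)
    (hmsg : ∀ v : V, ∀ J : 𝒥, v ∈ FG.nbhd J →
      R.mVF n v J (xstar v) > R.mVF n v J (!xstar v)) :
    ∀ v : V,
      marginal FG R (n + 1) v (xstar v) > marginal FG R (n + 1) v (!xstar v) := by
  intro v
  have hmsgJ (J : 𝒥) : ∀ y ∈ FG.nbhd J, R.mVF n y J (!xstar y) < R.mVF n y J (xstar y) :=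
    fun y hy => hmsg y J hy
  set P := ∏ J ∈ FG.Jset v, R.mFV (n + 1) J v (xstar v)
  have hP : 0 < P := Finset.prod_pos fun J hJ =>
    R.mFV_succ_pos (hvalid J) (hmsgJ J) (FG.mem_Jset.1 hJ)
  have hprod : ∏ J ∈ FG.Jset v, R.mFV (n + 1) J v (!xstar v) ≤
      (FG.kappa v : ℝ) ^ (FG.Jset v).card * P :=
    Finset.prod_le_pow_card_mul_prod _ (fun J hJ => (R.mFV_mem _ J v _ (FG.mem_Jset.1 hJ)).1)
      fun J hJ => R.mFV_succ_le_kappa_mul (hvalid J) (hmsgJ J) (FG.mem_Jset.1 hJ) _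
  have hprior := hinit.one_sub_eps_lt_prior v
  calc prior q v (!xstar v) * ∏ J ∈ FG.Jset v, R.mFV (n + 1) J v (!xstar v)
      ≤ prior q v (!xstar v) * ((FG.kappa v : ℝ) ^ (FG.Jset v).card * P) :=
        mul_le_mul_of_nonneg_left hprod (prior_nonneg (R.q_mem v) _)
    _ ≤ FG.eps v * ((FG.kappa v : ℝ) ^ (FG.Jset v).card * P) := by
        gcongr
        rw [prior_not]
        linarith
    _ = (1 - FG.eps v) * P := by rw [FG.one_sub_eps]; ring
    _ < prior q v (xstar v) * P := by gcongr
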